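/- Let v₁ = (0,0,0), v₂ = (1000,0,0), v₃ = (375,781,0), v₄ = (−31,220,722), v₅ = (53,−46,−239), v₆ = (146,626,496), v₇ = (837,−97,517), v₈ = (21,311,109), v₉ = (835,−174,−208), v₁₀ = (650,749,129) in ℝ³, and define edge vectors eᵢ = v_{i+1} − vᵢ for i = 1, …, 9 and e₁₀ = v₁ − v₁₀. Then there is no w ∈ ℝ³ such that (−1)^{i+1} (w · eᵢ) > 0 for every i ∈ {1, …, 10}. -/

import Mathlib

/-!
Four vectors in `ℝ³` are linearly dependent, and for the signed edges `e₁, −e₂, e₃, −e₆` of this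
polygon the dependence has positive coefficients. Pairing it with `w` gives a positive combination of
the four numbers `±(w · eᵢ)` that vanishes, so they cannot all be positive (a Farkas certificate).
-/

/-- The vertices of the paper's 10-stick polygonal realization of the knot `8_15`.
Here `vert8_15 i` is the paper's vertex `v_(i+1)`. -/
noncomputable def vert8_15 : Fin 10 → (Fin 3 → ℝ) :=
  ![![0, 0, 0], ![1000, 0, 0], ![375, 781, 0], ![-31, 220, 722], ![53, -46, -239], ![146, 626, 496], ![837, -97, 517], ![21, 311, 109], ![835, -174, -208], ![650, 749, 129]]

/-- The edge vectors `eᵢ = v_(i+1) − vᵢ` (cyclically, so `e₁₀ = v₁ − v₁₀`);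
here `edge8_15 i` is the paper's `e_(i+1)`, using wrap-around addition on `Fin 10`. -/
noncomputable def edge8_15 (i : Fin 10) : Fin 3 → ℝ :=
  vert8_15 (i + 1) - vert8_15 i

theorem not_forall_dotProduct_pos_of_sum_smul_eq_zero {ι m R : Type*} [Fintype ι] [Fintype m]
    [CommRing R] [LinearOrder R] [IsStrictOrderedRing R] {u : ι → m → R} {c : ι → R}
    (hc : 0 ≤ c) (hc₀ : c ≠ 0) (hcu : ∑ i, c i • u i = 0) :
    ¬ ∃ w : m → R, ∀ i, 0 < w ⬝ᵥ u i := by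
  rintro ⟨w, hw⟩
  obtain ⟨k, hk⟩ := Function.ne_iff.mp hc₀
  have hpos : 0 < ∑ i, c i * (w ⬝ᵥ u i) :=
    Finset.sum_pos' (fun i _ => mul_nonneg (hc i) (hw i).le)
      ⟨k, Finset.mem_univ k, mul_pos ((hc k).lt_of_ne' hk) (hw k)⟩
  have hzero : ∑ i, c i * (w ⬝ᵥ u i) = 0 := by
    simp only [← smul_eq_mul, ← dotProduct_smul, ← dotProduct_sum, hcu, dotProduct_zero]
  exact hpos.ne' hzero

noncomputable def signedEdge8_15 (i : Fin 10) : Fin 3 → ℝ :=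
  (-1 : ℝ) ^ (i : ℕ) • edge8_15 i

-- Solving for the weights of `e₂, e₃, e₆` kills the second and third coordinates; `e₁` then
-- balances the first one.
noncomputable def certificate8_15 : Fin 10 → ℝ :=
  ![77410643, 510225000, 16401000, 0, 0, 563882000, 0, 0, 0, 0]

theorem certificate8_15_nonneg : 0 ≤ certificate8_15 := by
  intro i
  fin_cases i <;> norm_num [certificate8_15]

theorem certificate8_15_ne_zero : certificate8_15 ≠ 0 :=
  Function.ne_iff.mpr ⟨0, by norm_num [certificate8_15]⟩

theorem sum_certificate8_15_smul_signedEdge8_15 :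
    ∑ i, certificate8_15 i • signedEdge8_15 i = 0 := by
  ext j
  fin_cases j <;>
    simp [Fin.sum_univ_succ, certificate8_15, signedEdge8_15, edge8_15, vert8_15] <;> norm_num

/-- There is no `w ∈ ℝ³` such that `(−1)^(i+1) (w · eᵢ) > 0` for every
`i ∈ {1, …, 10}`: no projection of this polygon (the knot `8_15`) to a line has
5 local maxima. (With 0-based indexing `i : Fin 10`, the sign is `(−1)^i`.) -/
theorem no_alternating_direction_8_15 :
    ¬ ∃ w : Fin 3 → ℝ, ∀ i : Fin 10,
        0 < (-1 : ℝ) ^ (i : ℕ) * ∑ j : Fin 3, w j * edge8_15 i j := by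
  have key := not_forall_dotProduct_pos_of_sum_smul_eq_zero certificate8_15_nonneg
    certificate8_15_ne_zero sum_certificate8_15_smul_signedEdge8_15
  simp only [signedEdge8_15, dotProduct_smul, smul_eq_mul] at key
  exact key
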